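/- For every ε > 0 there exists a constant C_ε > 0 such that for all N ≥ 1, the number of triples (a,b,c) of positive integers with a,b,c ≤ N, gcd(a,b) = 1, a + b = c, and rad(abc) < c^(1−ε) is at most C_ε · N^(2/3). -/

import Mathlib

/-!
Rankin's trick bounds the number of `n ≤ N` with `rad n = r` by `N ^ δ * ∏_{p ∣ r} (p ^ δ - 1)⁻¹`,
and the product is bounded in terms of `δ` alone, since every factor with `p ^ δ ≥ 2` is at most
`1`. So each fibre of `rad` below `N` has `O_δ(N ^ δ)` elements.

For a counted triple, `rad a`, `rad b`, `rad c` are pairwise coprime, so their product is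
`rad (a * b * c) < N ^ (1 - ε)`, and the two smaller ones have product at most
`R = N ^ (2 (1 - ε) / 3)`. Those two entries determine the triple, and the pairs `(x, y)` with
`rad x * rad y ≤ R` are covered by at most `R (1 + log R)` products of two fibres of `rad`, so
there are `O_δ(R N ^ (3 δ))` of them. Taking `δ = 2 ε / 9` gives the exponent `2 / 3`.
-/

/-- The radical of a positive integer: the product of its distinct prime factors. -/
def rad (n : ℕ) : ℕ := n.primeFactors.prod id

open Finset Real

lemma primeFactors_rad (n : ℕ) : (rad n).primeFactors = n.primeFactors :=
  Nat.primeFactors_prod fun _ => Nat.prime_of_mem_primeFactors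

lemma rad_pos (n : ℕ) : 0 < rad n :=
  prod_pos fun _ hp => (Nat.prime_of_mem_primeFactors hp).pos

lemma rad_mul {m n : ℕ} (h : m.Coprime n) : rad (m * n) = rad m * rad n := by
  rw [rad, h.primeFactors_mul, prod_union h.disjoint_primeFactors, rad, rad]

lemma Nat.Coprime.rad_mul_mul_add {a b : ℕ} (h : a.Coprime b) :
    rad (a * b * (a + b)) = rad a * rad b * rad (a + b) := by
  have hac : a.Coprime (a + b) := Nat.coprime_self_add_right.mpr h
  have hbc : b.Coprime (a + b) := Nat.coprime_add_self_right.mpr h.symm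
  rw [rad_mul (hac.mul_left hbc), rad_mul h]

lemma factorization_mem_Icc {n p N : ℕ} (hn : n ≠ 0) (hnN : n ≤ N) (hp : p ∈ n.primeFactors) :
    n.factorization p ∈ Icc 1 N :=
  mem_Icc.mpr ⟨(Nat.prime_of_mem_primeFactors hp).factorization_pos_of_dvd hn
    (Nat.dvd_of_mem_primeFactors hp), (Nat.factorization_lt _ hn).le.trans hnN⟩

lemma sum_Icc_rpow_neg_pow_le {y δ : ℝ} (hy : 1 < y) (hδ : 0 < δ) (N : ℕ) :
    ∑ k ∈ Icc 1 N, (y ^ (-δ)) ^ k ≤ (y ^ δ - 1)⁻¹ := by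
  have hyδ : 1 < y ^ δ := one_lt_rpow hy hδ
  have hgeom := geom_sum_Ico_le_of_lt_one (m := 1) (n := N + 1) (x := y ^ (-δ))
    (by positivity) (rpow_lt_one_of_one_lt_of_neg hy (by linarith))
  rw [Ico_add_one_right_eq_Icc] at hgeom
  refine hgeom.trans_eq ?_
  rw [rpow_neg (by linarith)]
  field_simp

lemma sum_rpow_neg_le_prod {δ : ℝ} (hδ : 0 < δ) (N r : ℕ) :
    ∑ n ∈ Icc 1 N with rad n = r, (n : ℝ) ^ (-δ) ≤
      ∏ p ∈ r.primeFactors, ((p : ℝ) ^ δ - 1)⁻¹ := by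
  set P := r.primeFactors
  set F := {n ∈ Icc 1 N | rad n = r}
  have hF : ∀ n ∈ F, n ≠ 0 ∧ n ≤ N ∧ n.primeFactors = P := by
    intro n hn
    simp only [F, mem_filter, mem_Icc] at hn
    exact ⟨by omega, hn.1.2, by rw [← primeFactors_rad, hn.2]⟩
  let e : ℕ → P → ℕ := fun n p => n.factorization p
  let x : P → ℝ := fun p => ((p : ℕ) : ℝ) ^ (-δ)
  have hP1 : ∀ p : P, (1 : ℝ) < (p : ℕ) := fun p => by
    exact_mod_cast (Nat.prime_of_mem_primeFactors p.2).one_lt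
  have hrep : ∀ n ∈ F, n = ∏ p : P, (p : ℕ) ^ e n p := by
    intro n hn
    obtain ⟨hn0, -, hP⟩ := hF n hn
    conv_lhs => rw [Nat.prod_primeFactors_pow_factorization hn0, hP]
    exact (prod_coe_sort P fun p => p ^ n.factorization p).symm
  have he : ∀ n ∈ F, e n ∈ Fintype.piFinset fun _ => Icc 1 N := by
    intro n hn
    obtain ⟨hn0, hnN, hP⟩ := hF n hn
    exact Fintype.mem_piFinset.mpr fun p => factorization_mem_Icc hn0 hnN (by rw [hP]; exact p.2)
  have hx : ∀ n ∈ F, (n : ℝ) ^ (-δ) = ∏ p : P, x p ^ e n p := by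
    intro n hn
    conv_lhs => rw [hrep n hn]
    push_cast
    rw [← finsetProd_rpow _ _ fun _ _ => by positivity]
    refine prod_congr rfl fun p _ => ?_
    rw [← rpow_natCast_mul (by positivity), mul_comm, rpow_mul_natCast (by positivity)]
  have he_inj : Set.InjOn e F := fun m hm n hn h =>
    (hrep m hm).trans ((congrArg (fun v => ∏ p : P, (p : ℕ) ^ v p) h).trans (hrep n hn).symm)
  calc ∑ n ∈ F, (n : ℝ) ^ (-δ)
      = ∑ v ∈ F.image e, ∏ p : P, x p ^ v p := by
        rw [sum_image he_inj]
        exact sum_congr rfl hx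
    _ ≤ ∑ v ∈ Fintype.piFinset fun _ => Icc 1 N, ∏ p : P, x p ^ v p :=
        sum_le_sum_of_subset_of_nonneg (image_subset_iff.mpr he) fun v _ _ => by positivity
    _ = ∏ p : P, ∑ k ∈ Icc 1 N, x p ^ k := (prod_univ_sum _ _).symm
    _ ≤ ∏ p : P, ((p : ℝ) ^ δ - 1)⁻¹ :=
        prod_le_prod (fun p _ => by positivity) fun p _ => sum_Icc_rpow_neg_pow_le (hP1 p) hδ N
    _ = ∏ p ∈ P, ((p : ℝ) ^ δ - 1)⁻¹ := prod_coe_sort P fun p => ((p : ℝ) ^ δ - 1)⁻¹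

lemma exists_prod_inv_rpow_sub_one_le {δ : ℝ} (hδ : 0 < δ) :
    ∃ M > 0, ∀ s : Finset ℕ, (∀ p ∈ s, 2 ≤ p) → ∏ p ∈ s, ((p : ℝ) ^ δ - 1)⁻¹ ≤ M := by
  -- factors with `p ≥ L` are at most `1`, and only the fewer than `L` others can exceed it
  set L := ⌈(2 : ℝ) ^ δ⁻¹⌉₊
  set M₀ := max 1 ((2 : ℝ) ^ δ - 1)⁻¹
  have hM₀ : 1 ≤ M₀ := le_max_left _ _
  refine ⟨M₀ ^ L, by positivity, fun s hs => ?_⟩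
  have h2δ : (1 : ℝ) < 2 ^ δ := one_lt_rpow (by norm_num) hδ
  have h2p : ∀ p ∈ s, (2 : ℝ) ^ δ ≤ (p : ℝ) ^ δ := fun p hp =>
    rpow_le_rpow (by norm_num) (by exact_mod_cast hs p hp) hδ.le
  have hbound : ∀ p ∈ s, ((p : ℝ) ^ δ - 1)⁻¹ ≤ if p < L then M₀ else 1 := by
    intro p hp
    split_ifs with hpL
    · exact le_max_of_le_right (inv_anti₀ (by linarith) (by linarith [h2p p hp]))
    · have hLp : (2 : ℝ) ^ δ⁻¹ ≤ p := (Nat.le_ceil _).trans (by exact_mod_cast not_lt.mp hpL)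
      have : (2 : ℝ) ≤ (p : ℝ) ^ δ := by
        calc (2 : ℝ) = ((2 : ℝ) ^ δ⁻¹) ^ δ := by
              rw [← rpow_mul (by norm_num), inv_mul_cancel₀ hδ.ne', rpow_one]
          _ ≤ (p : ℝ) ^ δ := rpow_le_rpow (by positivity) hLp hδ.le
      exact inv_le_one_of_one_le₀ (by linarith)
  calc ∏ p ∈ s, ((p : ℝ) ^ δ - 1)⁻¹
      ≤ ∏ p ∈ s, if p < L then M₀ else 1 :=
        prod_le_prod (fun p hp => inv_nonneg.mpr (by linarith [h2p p hp])) hbound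
    _ = M₀ ^ #{p ∈ s | p < L} := by rw [prod_ite, prod_const, prod_const_one, mul_one]
    _ ≤ M₀ ^ L := by
        refine pow_le_pow_right₀ hM₀ ((card_le_card fun p hp => ?_).trans (card_range L).le)
        exact mem_range.mpr (mem_filter.mp hp).2

lemma exists_card_rad_eq_le {δ : ℝ} (hδ : 0 < δ) :
    ∃ C > 0, ∀ N r : ℕ, (#{n ∈ Icc 1 N | rad n = r} : ℝ) ≤ C * (N : ℝ) ^ δ := by
  obtain ⟨M, hM, hprod⟩ := exists_prod_inv_rpow_sub_one_le hδ
  refine ⟨M, hM, fun N r => ?_⟩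
  -- Rankin's trick: each `n ≤ N` contributes `1 ≤ (N / n) ^ δ`
  have hRankin : ∀ n ∈ Icc 1 N, (1 : ℝ) ≤ (N : ℝ) ^ δ * (n : ℝ) ^ (-δ) := by
    intro n hn
    have h1n : (1 : ℝ) ≤ n := by exact_mod_cast (mem_Icc.mp hn).1
    have hnN : (n : ℝ) ≤ N := by exact_mod_cast (mem_Icc.mp hn).2
    rw [rpow_neg (by positivity), ← div_eq_mul_inv, one_le_div (by positivity)]
    exact rpow_le_rpow (by positivity) hnN hδ.le
  calc (#{n ∈ Icc 1 N | rad n = r} : ℝ)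
      = ∑ n ∈ Icc 1 N with rad n = r, (1 : ℝ) := by rw [sum_const, nsmul_one]
    _ ≤ ∑ n ∈ Icc 1 N with rad n = r, (N : ℝ) ^ δ * (n : ℝ) ^ (-δ) :=
        sum_le_sum fun n hn => hRankin n (mem_filter.mp hn).1
    _ = (N : ℝ) ^ δ * ∑ n ∈ Icc 1 N with rad n = r, (n : ℝ) ^ (-δ) := (mul_sum _ _ _).symm
    _ ≤ (N : ℝ) ^ δ * M := by
        gcongr
        exact (sum_rpow_neg_le_prod hδ N r).trans
          (hprod _ fun p hp => (Nat.prime_of_mem_primeFactors hp).two_le)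
    _ = M * (N : ℝ) ^ δ := mul_comm _ _

lemma card_pairs_mul_le (R : ℕ) :
    (#{q ∈ Icc 1 R ×ˢ Icc 1 R | q.1 * q.2 ≤ R} : ℝ) ≤ R * (1 + log R) := by
  set D := {q ∈ Icc 1 R ×ˢ Icc 1 R | q.1 * q.2 ≤ R}
  have hfiber : ∀ a ∈ Icc 1 R, #{q ∈ D | q.1 = a} ≤ R / a := by
    intro a ha
    have ha0 : 0 < a := (mem_Icc.mp ha).1
    calc #{q ∈ D | q.1 = a} ≤ #(Icc 1 (R / a)) := by
          refine card_le_card_of_injOn Prod.snd (fun q hq => ?_) fun q hq q' hq' h => ?_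
          · simp only [D, mem_coe, mem_filter, mem_product, mem_Icc] at hq ⊢
            refine ⟨hq.1.1.2.1, (Nat.le_div_iff_mul_le ha0).mpr ?_⟩
            rw [mul_comm, ← hq.2]; exact hq.1.2
          · simp only [mem_coe, mem_filter] at hq hq'
            exact Prod.ext (hq.2.trans hq'.2.symm) h
      _ = R / a := by simp
  calc (#D : ℝ) = ∑ a ∈ Icc 1 R, (#{q ∈ D | q.1 = a} : ℝ) := by
        exact_mod_cast card_eq_sum_card_fiberwise fun q hq =>
          (mem_product.mp (mem_filter.mp hq).1).1
    _ ≤ ∑ a ∈ Icc 1 R, (R : ℝ) * (a : ℝ)⁻¹ := by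
        refine sum_le_sum fun a ha => ?_
        rw [← div_eq_mul_inv]
        exact (Nat.cast_le.mpr (hfiber a ha)).trans Nat.cast_div_le
    _ = R * harmonic R := by
        rw [← mul_sum, harmonic_eq_sum_Icc]; push_cast; rfl
    _ ≤ R * (1 + log R) := by gcongr; exact harmonic_le_one_add_log R

lemma card_rad_mul_rad_le {N R : ℕ} {B : ℝ}
    (hB : ∀ r, (#{n ∈ Icc 1 N | rad n = r} : ℝ) ≤ B) :
    (#{x ∈ Icc 1 N ×ˢ Icc 1 N | rad x.1 * rad x.2 ≤ R} : ℝ) ≤ B ^ 2 * (R * (1 + log R)) := by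
  set S := {x ∈ Icc 1 N ×ˢ Icc 1 N | rad x.1 * rad x.2 ≤ R}
  set D := {q ∈ Icc 1 R ×ˢ Icc 1 R | q.1 * q.2 ≤ R}
  have hmaps : Set.MapsTo (fun x : ℕ × ℕ => (rad x.1, rad x.2)) S D := by
    intro x hx
    simp only [S, D, mem_coe, mem_filter, mem_product, mem_Icc] at hx ⊢
    have h1 := rad_pos x.1
    have h2 := rad_pos x.2
    exact ⟨⟨⟨h1, le_of_mul_le_of_one_le_left hx.2 h2⟩, h2, le_of_mul_le_of_one_le_right hx.2 h1⟩,
      hx.2⟩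
  have hB0 : 0 ≤ B := (Nat.cast_nonneg _).trans (hB 0)
  have hfiber : ∀ q ∈ D, (#{x ∈ S | (rad x.1, rad x.2) = q} : ℝ) ≤ B ^ 2 := by
    intro q _
    have hsub : {x ∈ S | (rad x.1, rad x.2) = q} ⊆
        {n ∈ Icc 1 N | rad n = q.1} ×ˢ {n ∈ Icc 1 N | rad n = q.2} := by
      intro x hx
      simp only [S, mem_filter, mem_product, Prod.ext_iff] at hx ⊢
      exact ⟨⟨hx.1.1.1, hx.2.1⟩, hx.1.1.2, hx.2.2⟩
    calc (#{x ∈ S | (rad x.1, rad x.2) = q} : ℝ)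
        ≤ #{n ∈ Icc 1 N | rad n = q.1} * #{n ∈ Icc 1 N | rad n = q.2} := by
          exact_mod_cast (card_le_card hsub).trans (card_product _ _).le
      _ ≤ B * B := mul_le_mul (hB _) (hB _) (Nat.cast_nonneg _) hB0
      _ = B ^ 2 := (sq B).symm
  calc (#S : ℝ) = ∑ q ∈ D, (#{x ∈ S | (rad x.1, rad x.2) = q} : ℝ) := by
        exact_mod_cast card_eq_sum_card_fiberwise hmaps
    _ ≤ ∑ q ∈ D, B ^ 2 := sum_le_sum hfiber
    _ = B ^ 2 * #D := by rw [sum_const, nsmul_eq_mul, mul_comm]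
    _ ≤ B ^ 2 * (R * (1 + log R)) := by gcongr; exact card_pairs_mul_le R

lemma exists_card_rad_mul_rad_le_rpow {δ : ℝ} (hδ : 0 < δ) :
    ∃ C > 0, ∀ N : ℕ, 1 ≤ N → ∀ θ : ℝ, 0 ≤ θ → θ ≤ 1 →
      (#{x ∈ Icc 1 N ×ˢ Icc 1 N | rad x.1 * rad x.2 ≤ ⌊(N : ℝ) ^ θ⌋₊} : ℝ) ≤
        C * (N : ℝ) ^ (θ + 3 * δ) := by
  obtain ⟨B, hB, hfiber⟩ := exists_card_rad_eq_le hδ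
  refine ⟨B ^ 2 * (1 + δ⁻¹), by positivity, fun N hN θ hθ0 hθ1 => ?_⟩
  set R := ⌊(N : ℝ) ^ θ⌋₊
  have hN1 : (1 : ℝ) ≤ N := by exact_mod_cast hN
  have hN0 : (0 : ℝ) < N := by linarith
  have hR : (R : ℝ) ≤ (N : ℝ) ^ θ := Nat.floor_le (by positivity)
  have hRN : (R : ℝ) ≤ N := hR.trans (by simpa using rpow_le_rpow_of_exponent_le hN1 hθ1)
  have hlogR : log R ≤ log N := by
    rcases Nat.eq_zero_or_pos R with h0 | hpos
    · simpa [h0] using log_nonneg hN1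
    · exact log_le_log (by exact_mod_cast hpos) hRN
  have hlog : 1 + log R ≤ (1 + δ⁻¹) * (N : ℝ) ^ δ := by
    calc 1 + log R ≤ (N : ℝ) ^ δ + (N : ℝ) ^ δ / δ := by
          linarith [one_le_rpow hN1 hδ.le, log_le_rpow_div hN0.le hδ]
      _ = (1 + δ⁻¹) * (N : ℝ) ^ δ := by ring
  calc (#{x ∈ Icc 1 N ×ˢ Icc 1 N | rad x.1 * rad x.2 ≤ R} : ℝ)
      ≤ (B * (N : ℝ) ^ δ) ^ 2 * (R * (1 + log R)) := card_rad_mul_rad_le (hfiber N)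
    _ ≤ (B * (N : ℝ) ^ δ) ^ 2 * ((N : ℝ) ^ θ * ((1 + δ⁻¹) * (N : ℝ) ^ δ)) := by gcongr
    _ = B ^ 2 * (1 + δ⁻¹) * ((N : ℝ) ^ θ * (N : ℝ) ^ δ * (N : ℝ) ^ δ * (N : ℝ) ^ δ) := by ring
    _ = B ^ 2 * (1 + δ⁻¹) * (N : ℝ) ^ (θ + 3 * δ) := by
        rw [← rpow_add hN0, ← rpow_add hN0, ← rpow_add hN0]; ring_nf

lemma mul_le_of_mul_mul_lt {u v w R : ℕ} {X : ℝ} (hu : u ≤ w) (hv : v ≤ w)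
    (h : ((u * v * w : ℕ) : ℝ) < X) (hX : X ^ 2 ≤ ((R + 1 : ℕ) : ℝ) ^ 3) : u * v ≤ R := by
  have hcube : (u * v) ^ 3 ≤ (u * v * w) ^ 2 := by
    calc (u * v) ^ 3 = (u * v) ^ 2 * (u * v) := by ring
      _ ≤ (u * v) ^ 2 * (w * w) := Nat.mul_le_mul_left _ (Nat.mul_le_mul hu hv)
      _ = (u * v * w) ^ 2 := by ring
  have hlt : (u * v) ^ 3 < (R + 1) ^ 3 := by
    have : ((u * v * w : ℕ) : ℝ) ^ 2 < ((R + 1 : ℕ) : ℝ) ^ 3 :=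
      (pow_lt_pow_left₀ h (Nat.cast_nonneg _) two_ne_zero).trans_le hX
    exact hcube.trans_lt (by exact_mod_cast this)
  exact Nat.lt_succ_iff.mp ((Nat.pow_lt_pow_iff_left three_ne_zero).mp hlt)

lemma card_abc_triples_le_three_mul_card_pairs (N R : ℕ) (X : ℕ → ℝ)
    (hX : ∀ c ∈ Icc 1 N, X c ^ 2 ≤ ((R + 1 : ℕ) : ℝ) ^ 3) :
    #{t ∈ Icc 1 N ×ˢ Icc 1 N ×ˢ Icc 1 N | t.1.Coprime t.2.1 ∧ t.1 + t.2.1 = t.2.2 ∧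
        (rad (t.1 * t.2.1 * t.2.2) : ℝ) < X t.2.2} ≤
      3 * #{x ∈ Icc 1 N ×ˢ Icc 1 N | rad x.1 * rad x.2 ≤ R} := by
  set S := {x ∈ Icc 1 N ×ˢ Icc 1 N | rad x.1 * rad x.2 ≤ R}
  -- a triple is determined by any two of its entries; keep the two of smaller radical
  have hcover : {t ∈ Icc 1 N ×ˢ Icc 1 N ×ˢ Icc 1 N | t.1.Coprime t.2.1 ∧ t.1 + t.2.1 = t.2.2 ∧
      (rad (t.1 * t.2.1 * t.2.2) : ℝ) < X t.2.2} ⊆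
      S.image (fun x => (x.1, x.2, x.1 + x.2)) ∪ S.image (fun x => (x.1, x.2 - x.1, x.2)) ∪
        S.image (fun x => (x.2 - x.1, x.1, x.2)) := by
    rintro ⟨a, b, c⟩ ht
    simp only [mem_filter, mem_product, mem_Icc] at ht
    obtain ⟨⟨ha, hb, hc⟩, hab, rfl, hrad⟩ := ht
    rw [hab.rad_mul_mul_add] at hrad
    have hXc := hX _ (mem_Icc.mpr hc)
    simp only [S, mem_union, mem_image, mem_filter, mem_product, mem_Icc, Prod.exists,
      Prod.mk.injEq]
    by_cases hc_max : rad a ≤ rad (a + b) ∧ rad b ≤ rad (a + b)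
    · exact .inl (.inl ⟨a, b, ⟨⟨ha, hb⟩, mul_le_of_mul_mul_lt hc_max.1 hc_max.2 hrad hXc⟩,
        rfl, rfl, rfl⟩)
    by_cases hb_max : rad a ≤ rad b ∧ rad (a + b) ≤ rad b
    · refine .inl (.inr ⟨a, a + b, ⟨⟨ha, hc⟩, mul_le_of_mul_mul_lt hb_max.1 hb_max.2 ?_ hXc⟩,
        rfl, by omega, rfl⟩)
      rwa [mul_right_comm]
    have ha_max : rad b ≤ rad a ∧ rad (a + b) ≤ rad a := by omega
    refine .inr ⟨b, a + b, ⟨⟨hb, hc⟩, mul_le_of_mul_mul_lt ha_max.1 ha_max.2 ?_ hXc⟩,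
      by omega, rfl, rfl⟩
    rwa [mul_comm, ← mul_assoc]
  calc _ ≤ _ := card_le_card hcover
    _ ≤ #S + #S + #S := (card_union_le _ _).trans (add_le_add ((card_union_le _ _).trans
          (add_le_add card_image_le card_image_le)) card_image_le)
    _ = 3 * #S := by ring

lemma sq_rpow_le_rpow_pow_three {x y ε ε' : ℝ} (hx : 1 ≤ x) (hxy : x ≤ y) (hε : ε' ≤ ε)
    (hε' : ε' ≤ 1) : (x ^ (1 - ε)) ^ 2 ≤ (y ^ (2 * (1 - ε') / 3)) ^ 3 := by
  calc (x ^ (1 - ε)) ^ 2 ≤ (y ^ (1 - ε')) ^ 2 := by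
        gcongr
        exact (rpow_le_rpow_of_exponent_le hx (by linarith)).trans
          (rpow_le_rpow (by positivity) hxy (by linarith))
    _ = (y ^ (2 * (1 - ε') / 3)) ^ 3 := by
        rw [← rpow_mul_natCast (by linarith), ← rpow_mul_natCast (by linarith)]
        ring_nf

theorem abc_almost_always (ε : ℝ) (hε : 0 < ε) :
    ∃ C : ℝ, 0 < C ∧ ∀ N : ℕ, 1 ≤ N →
      ((((Finset.Icc 1 N) ×ˢ (Finset.Icc 1 N) ×ˢ (Finset.Icc 1 N)).filter
          (fun t : ℕ × ℕ × ℕ => Nat.Coprime t.1 t.2.1 ∧ t.1 + t.2.1 = t.2.2 ∧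
            (rad (t.1 * t.2.1 * t.2.2) : ℝ) < (t.2.2 : ℝ) ^ (1 - ε))).card : ℝ)
        ≤ C * (N : ℝ) ^ ((2 : ℝ) / 3) := by
  -- shrinking `ε` only enlarges the count, and `c ^ (1 - ε') ≤ N ^ (1 - ε')` needs `ε' ≤ 1`
  set ε' := min ε 1
  have hε' : 0 < ε' := lt_min hε one_pos
  have hε'ε : ε' ≤ ε := min_le_left _ _
  have hε'1 : ε' ≤ 1 := min_le_right _ _
  set θ := 2 * (1 - ε') / 3 with hθ
  obtain ⟨C, hC, hpairs⟩ := exists_card_rad_mul_rad_le_rpow (δ := 2 * ε' / 9) (by positivity)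
  refine ⟨3 * C, by positivity, fun N hN => ?_⟩
  have hX : ∀ c ∈ Icc 1 N, ((c : ℝ) ^ (1 - ε)) ^ 2 ≤ ((⌊(N : ℝ) ^ θ⌋₊ + 1 : ℕ) : ℝ) ^ 3 := by
    intro c hc
    obtain ⟨hc1, hcN⟩ := mem_Icc.mp hc
    refine (sq_rpow_le_rpow_pow_three (y := N) (by exact_mod_cast hc1) (by exact_mod_cast hcN)
      hε'ε hε'1).trans ?_
    gcongr
    push_cast
    exact (Nat.lt_floor_add_one _).le
  calc _ ≤ 3 * (#{x ∈ Icc 1 N ×ˢ Icc 1 N | rad x.1 * rad x.2 ≤ ⌊(N : ℝ) ^ θ⌋₊} : ℝ) := by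
        exact_mod_cast card_abc_triples_le_three_mul_card_pairs N _ (fun c => (c : ℝ) ^ (1 - ε)) hX
    _ ≤ 3 * (C * (N : ℝ) ^ (θ + 3 * (2 * ε' / 9))) := by
        gcongr
        exact hpairs N hN θ (by rw [hθ]; linarith) (by rw [hθ]; linarith)
    _ = 3 * C * (N : ℝ) ^ ((2 : ℝ) / 3) := by rw [hθ, ← mul_assoc]; ring_nf
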